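/- Let f : ℝ → ℝ be C⁴ with f ≥ 0 and |f''''| ≤ 1 everywhere. Then for all real y: |f'(0)·y| ≤ (3/2) f(0) + f''(0) y² + (1/6) y⁴, and |f'''(0)·y³| ≤ 3 f(0) + 3 f''(0) y² + y⁴. -/

import Mathlib

/-!
By Taylor's formula with Lagrange remainder and `|f''''| ≤ 1`, the quartic
`P(t) = f(0) + f'(0) t + f''(0) t²/2 + f'''(0) t³/6 + t⁴/24` dominates `f(t) ≥ 0`, so its odd
part `O(t) = f'(0) t + f'''(0) t³/6` is bounded in absolute value by its even part `E(t)`.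
The combinations `8 O(y) - O(2y) = 6 f'(0) y` and `O(2y) - 2 O(y) = f'''(0) y³` isolate the
odd derivatives, and `8 E(y) + E(2y)`, `E(2y) + 2 E(y)` are the stated right-hand sides
(the second one up to `y⁴/4`).
-/

open Set Finset Nat

lemma taylorWithinEval_eq_sum_iteratedDeriv {f : ℝ → ℝ} {n : ℕ} (hf : ContDiff ℝ n f)
    {s : Set ℝ} (hs : UniqueDiffOn ℝ s) {x₀ : ℝ} (hx₀ : x₀ ∈ s) (x : ℝ) :
    taylorWithinEval f n s x₀ x =
      ∑ k ∈ range (n + 1), iteratedDeriv k f x₀ / k ! * (x - x₀) ^ k := by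
  rw [taylor_within_apply]
  refine sum_congr rfl fun k hk => ?_
  have hkn : (k : WithTop ℕ∞) ≤ n := by exact_mod_cast Nat.lt_succ_iff.1 (mem_range.1 hk)
  rw [iteratedDerivWithin_eq_iteratedDeriv hs ((hf.of_le hkn).contDiffAt) hx₀, smul_eq_mul]
  ring

lemma abs_sub_taylor_sum_le {f : ℝ → ℝ} {n : ℕ} {M : ℝ} (hf : ContDiff ℝ (n + 1) f)
    (hM : ∀ x, |iteratedDeriv (n + 1) f x| ≤ M) (x₀ x : ℝ) :
    |f x - ∑ k ∈ range (n + 1), iteratedDeriv k f x₀ / k ! * (x - x₀) ^ k| ≤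
      M * |x - x₀| ^ (n + 1) / (n + 1)! := by
  rcases eq_or_ne x₀ x with rfl | hx
  · rw [sum_range_succ', sub_self]
    simp
  obtain ⟨c, -, hc⟩ := taylor_mean_remainder_lagrange_iteratedDeriv hx hf.contDiffOn
  rw [← taylorWithinEval_eq_sum_iteratedDeriv (hf.of_le (by norm_cast; omega))
    (uniqueDiffOn_uIcc hx) left_mem_uIcc, hc, abs_div, abs_mul, abs_pow, Nat.abs_cast]
  gcongr
  exact hM c

lemma cubic_taylor_add_quartic_nonneg {f : ℝ → ℝ} (hf : ContDiff ℝ 4 f) (h0 : ∀ x, 0 ≤ f x)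
    (h4 : ∀ x, |iteratedDeriv 4 f x| ≤ 1) (t : ℝ) :
    0 ≤ f 0 + deriv f 0 * t + iteratedDeriv 2 f 0 / 2 * t ^ 2 + iteratedDeriv 3 f 0 / 6 * t ^ 3
      + t ^ 4 / 24 := by
  have hT := (abs_le.1 (abs_sub_taylor_sum_le (n := 3) hf h4 0 t)).2
  simp only [sum_range_succ, sum_range_zero, sub_zero, iteratedDeriv_zero, iteratedDeriv_one,
    (by decide : Even (3 + 1)).pow_abs] at hT
  norm_num [Nat.factorial] at hT
  linarith [h0 t]

lemma abs_odd_part_le_even_part {a b c d : ℝ}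
    (hP : ∀ t, 0 ≤ a + b * t + c / 2 * t ^ 2 + d / 6 * t ^ 3 + t ^ 4 / 24) (t : ℝ) :
    |b * t + d / 6 * t ^ 3| ≤ a + c / 2 * t ^ 2 + t ^ 4 / 24 := by
  have hneg := hP (-t)
  rw [Even.neg_pow (by decide), Odd.neg_pow (by decide), Even.neg_pow (by decide)] at hneg
  exact abs_le.2 ⟨by linarith [hP t], by linarith⟩

/-- Intermediate Taylor expansion inequalities in the Fefferman–Phong argument:
if `f ≥ 0` and `|f''''| ≤ 1` on `ℝ`, then for all real `y`,
`|f'(0)·y| ≤ (3/2) f(0) + f''(0) y² + (1/6) y⁴` and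
`|f'''(0)·y³| ≤ 3 f(0) + 3 f''(0) y² + y⁴`. -/
theorem taylor_combination_bounds (f : ℝ → ℝ) (hf : ContDiff ℝ 4 f)
    (h0 : ∀ x, 0 ≤ f x) (h4 : ∀ x, |iteratedDeriv 4 f x| ≤ 1) :
    ∀ y : ℝ,
      |deriv f 0 * y| ≤ (3 / 2) * f 0 + iteratedDeriv 2 f 0 * y ^ 2 + (1 / 6) * y ^ 4 ∧
      |iteratedDeriv 3 f 0 * y ^ 3| ≤ 3 * f 0 + 3 * iteratedDeriv 2 f 0 * y ^ 2 + y ^ 4 := by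
  intro y
  have hO := abs_odd_part_le_even_part (cubic_taylor_add_quartic_nonneg hf h0 h4)
  obtain ⟨hy₁, hy₂⟩ := abs_le.1 (hO y)
  obtain ⟨h2y₁, h2y₂⟩ := abs_le.1 (hO (2 * y))
  simp only [mul_pow] at h2y₁ h2y₂
  have hy4 : 0 ≤ y ^ 4 := by positivity
  refine ⟨abs_le.2 ⟨?_, ?_⟩, abs_le.2 ⟨?_, ?_⟩⟩ <;> norm_num at h2y₁ h2y₂ <;> linarith
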